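/- Let r ≥ 5, let ℓ ≥ 0, and let I = {i_1 < i_2 < ⋯ < i_ℓ} be a set of nonconsecutive integers with 1 < i_1 and i_ℓ < r−2, and let c_{i_1},…,c_{i_ℓ} be positive integers with m = Σ_{j=1}^ℓ c_{i_j}. Let λ ∈ ℕ^r have i_j-th coordinate 1 + c_{i_j} for each j and all other coordinates 1, and write N_k = N_k(λ) and T = Σ_{k≥0} N_k. Then the mean and variance of the number of parts are: (Σ_{k≥0} k·N_k)/T = (r+1)/2 − ℓ/5 + m, and (Σ_{k≥0} k²·N_k)/T − ((Σ_{k≥0} k·N_k)/T)² = (r−1)/4 + 3ℓ/50 (identities of rational numbers). -/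

import Mathlib

open Polynomial

/-- The positive roots of the Lie algebra of type `A_r` in simple-root coordinates:
the indicator vectors `α[i,j]` of the intervals `[i,j]` for `1 ≤ i ≤ j ≤ r`
(positions are `1`-based, so position `i` corresponds to `t : Fin r` with `t.val + 1 = i`). -/
def isPosRootA (r : ℕ) (v : Fin r → ℕ) : Prop :=
  ∃ i j : ℕ, 1 ≤ i ∧ i ≤ j ∧ j ≤ r ∧
    v = fun t => if i ≤ t.val + 1 ∧ t.val + 1 ≤ j then 1 else 0

/-- `NA r k ξ` is the number of decompositions of the weight `ξ` as a sum of exactly `k`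
positive roots of `A_r`, i.e. the number of `ℕ`-valued functions (with finite support)
on the set of positive roots whose values sum to `k` and whose weighted vector sum is `ξ`. -/
noncomputable def NA (r k : ℕ) (ξ : Fin r → ℕ) : ℕ :=
  Set.ncard {m : (Fin r → ℕ) →₀ ℕ |
    (∀ v ∈ m.support, isPosRootA r v) ∧
    (m.sum fun _ n => n) = k ∧
    (m.sum fun v n => n • v) = ξ}

/-!
Write `P_ξ = ∑ₖ N_k(ξ) Xᵏ`. If `ξ_p = 1`, exactly one root of each decomposition covers `p`;
cutting it at `p` into a root ending at `p` and one starting at `p` is a bijection, so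
`X · P_ξ = P_{ξ|≤p} · P_{ξ|≥p}`. Gluing at every position outside `I` splits `λ` into blocks: two
consecutive positions outside `I` give `X (1 + X)`, and `i ∈ I` with its two neighbours gives
`X^(c_i + 1) (X² + 2X + 2)` (`X²`: no root crosses either side of `i`; `2X`: a root crosses one
side; `2`: both sides are crossed, by one root through `i` or by two roots meeting at `i`). Hence
`P_λ = X^(1 + m) (1 + X)^(r - 1 - 2ℓ) (X² + 2X + 2)^ℓ`, and mean and variance are additive over
products of generating functions: `X`, `1 + X`, `X² + 2X + 2` have means `1, 1/2, 4/5` and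
variances `0, 1/4, 14/25`.
-/

namespace Polynomial

variable {K : Type*} [Field K] {p q : K[X]}

/-- The mean of the distribution on `ℕ` with weights `p.coeff k`. -/
noncomputable def pgfMean (p : K[X]) : K := (derivative p).eval 1 / p.eval 1

/-- The variance of the distribution on `ℕ` with weights `p.coeff k`; the second moment
`∑ k ^ 2 * p.coeff k` is `p'' 1 + p' 1`. -/
noncomputable def pgfVariance (p : K[X]) : K :=
  ((derivative (derivative p)).eval 1 + (derivative p).eval 1) / p.eval 1 - pgfMean p ^ 2

lemma pgfMean_mul (hp : p.eval 1 ≠ 0) (hq : q.eval 1 ≠ 0) :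
    pgfMean (p * q) = pgfMean p + pgfMean q := by
  simp only [pgfMean, derivative_mul, eval_add, eval_mul]
  field_simp

lemma pgfVariance_mul (hp : p.eval 1 ≠ 0) (hq : q.eval 1 ≠ 0) :
    pgfVariance (p * q) = pgfVariance p + pgfVariance q := by
  simp only [pgfVariance, pgfMean, derivative_mul, derivative_add, eval_add, eval_mul]
  field_simp
  ring

lemma pgfMean_pow (hp : p.eval 1 ≠ 0) (n : ℕ) : pgfMean (p ^ n) = n * pgfMean p := by
  induction n with
  | zero => simp [pgfMean]
  | succ n ih =>
    rw [pow_succ, pgfMean_mul (by rw [eval_pow]; exact pow_ne_zero _ hp) hp, ih]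
    push_cast
    ring

lemma pgfVariance_pow (hp : p.eval 1 ≠ 0) (n : ℕ) :
    pgfVariance (p ^ n) = n * pgfVariance p := by
  induction n with
  | zero => simp [pgfVariance, pgfMean]
  | succ n ih =>
    rw [pow_succ, pgfVariance_mul (by rw [eval_pow]; exact pow_ne_zero _ hp) hp, ih]
    push_cast
    ring

lemma pgfMean_X_pow_mul_pow_mul_pow (a b n : ℕ) :
    pgfMean (X ^ a * (1 + X) ^ b * (X ^ 2 + 2 * X + 2) ^ n : ℚ[X]) = a + b / 2 + 4 * n / 5 := by
  simp (disch := norm_num) only [pgfMean_mul, pgfMean_pow]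
  norm_num [pgfMean]
  ring

lemma pgfVariance_X_pow_mul_pow_mul_pow (a b n : ℕ) :
    pgfVariance (X ^ a * (1 + X) ^ b * (X ^ 2 + 2 * X + 2) ^ n : ℚ[X]) = b / 4 + 14 * n / 25 := by
  simp (disch := norm_num) only [pgfVariance_mul, pgfVariance_pow]
  norm_num [pgfVariance, pgfMean]
  ring

end Polynomial

namespace TypeA

open Finset

variable {r : ℕ}

/-- The positive root `α[a + 1, b + 1]`: positions in `Fin r` are `0`-based. -/
noncomputable def root (a b : Fin r) : Fin r → ℕ := (Set.Icc a b).indicator 1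

lemma root_apply (a b t : Fin r) : root a b t = if a ≤ t ∧ t ≤ b then 1 else 0 := by
  simp [root, Set.indicator_apply]

lemma isPosRootA_iff {v : Fin r → ℕ} : isPosRootA r v ↔ ∃ a b : Fin r, a ≤ b ∧ v = root a b := by
  constructor
  · rintro ⟨i, j, hi, hij, hj, rfl⟩
    refine ⟨⟨i - 1, by omega⟩, ⟨j - 1, by omega⟩, Fin.mk_le_mk.2 (by omega), funext fun t => ?_⟩
    simp only [root_apply, Fin.le_def]
    split_ifs <;> omega
  · rintro ⟨a, b, hab, rfl⟩
    refine ⟨a + 1, b + 1, by omega, by omega, by omega, funext fun t => ?_⟩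
    simp only [root_apply, Fin.le_def]
    split_ifs <;> omega

lemma root_injective {a b a' b' : Fin r} (hab : a ≤ b) (h : root a b = root a' b') :
    a = a' ∧ b = b' := by
  have key := fun t => congrFun h t
  simp only [root_apply] at key
  have ha := key a
  have hb := key b
  have ha' := key a'
  have hb' := key b'
  split_ifs at ha hb ha' hb' <;> omega

noncomputable def weight (m : (Fin r → ℕ) →₀ ℕ) : Fin r → ℕ := Finsupp.linearCombination ℕ id m

lemma weight_apply (m : (Fin r → ℕ) →₀ ℕ) (t : Fin r) :
    weight m t = ∑ v ∈ m.support, m v * v t := by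
  simp [weight, Finsupp.linearCombination_apply, Finsupp.sum, Finset.sum_apply]

lemma weight_add (m m' : (Fin r → ℕ) →₀ ℕ) : weight (m + m') = weight m + weight m' :=
  map_add _ m m'

lemma weight_single (v : Fin r → ℕ) (n : ℕ) : weight (Finsupp.single v n) = n • v :=
  Finsupp.linearCombination_single ℕ n v

lemma weight_mono {m m' : (Fin r → ℕ) →₀ ℕ} (h : m ≤ m') : weight m ≤ weight m' := by
  obtain ⟨d, rfl⟩ := exists_add_of_le h
  rw [weight_add]
  exact le_self_add

lemma smul_le_weight (m : (Fin r → ℕ) →₀ ℕ) (v : Fin r → ℕ) : m v • v ≤ weight m := by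
  rw [← weight_single]
  exact weight_mono (Finsupp.single_le_iff.2 le_rfl)

lemma le_weight_of_mem_support {m : (Fin r → ℕ) →₀ ℕ} {v : Fin r → ℕ} (hv : v ∈ m.support) :
    v ≤ weight m :=
  (le_smul_of_one_le_left (fun _ => Nat.zero_le _)
    (Nat.one_le_iff_ne_zero.2 (Finsupp.mem_support_iff.1 hv))).trans (smul_le_weight m v)

def decomps (ξ : Fin r → ℕ) : Set ((Fin r → ℕ) →₀ ℕ) :=
  {m | (∀ v ∈ m.support, isPosRootA r v) ∧ weight m = ξ}

lemma apply_le_of_mem_decomps {ξ : Fin r → ℕ} {m : (Fin r → ℕ) →₀ ℕ} (hm : m ∈ decomps ξ)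
    (v : Fin r → ℕ) : m v ≤ ∑ t, ξ t := by
  by_cases hv : v ∈ m.support
  · obtain ⟨a, b, hab, rfl⟩ := isPosRootA_iff.1 (hm.1 _ hv)
    have := hm.2 ▸ smul_le_weight m (root a b) a
    simp only [Pi.smul_apply, root_apply, le_refl, hab, and_self, if_true, smul_eq_mul,
      mul_one] at this
    exact this.trans (Finset.single_le_sum (fun _ _ => Nat.zero_le _) (Finset.mem_univ a))
  · simp [Finsupp.notMem_support_iff.1 hv]

lemma decomps_finite (ξ : Fin r → ℕ) : (decomps ξ).Finite := by
  let bound : (Fin r → ℕ) →₀ ℕ :=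
    ∑ ab : Fin r × Fin r, Finsupp.single (root ab.1 ab.2) (∑ t, ξ t)
  refine (Finset.Iic bound).finite_toSet.subset fun m hm => ?_
  rw [Finset.coe_Iic, Set.mem_Iic, Finsupp.le_def]
  intro v
  by_cases hv : v ∈ m.support
  · obtain ⟨a, b, -, rfl⟩ := isPosRootA_iff.1 (hm.1 _ hv)
    calc m (root a b) ≤ ∑ t, ξ t := apply_le_of_mem_decomps hm _
      _ = Finsupp.single (root a b) (∑ t, ξ t) (root a b) := by simp
      _ ≤ bound (root a b) := by
        rw [Finsupp.finsetSum_apply]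
        exact Finset.single_le_sum (f := fun ab : Fin r × Fin r =>
          Finsupp.single (root ab.1 ab.2) (∑ t, ξ t) (root a b)) (fun _ _ => Nat.zero_le _)
          (Finset.mem_univ (a, b))
  · simp [Finsupp.notMem_support_iff.1 hv]

/-- `∑ₖ NA r k ξ • Xᵏ`, the decompositions of `ξ` counted by number of parts. -/
noncomputable def genPoly (R : Type*) [CommSemiring R] (ξ : Fin r → ℕ) : R[X] :=
  ∑ m ∈ (decomps_finite ξ).toFinset, X ^ m.degree

variable {R : Type*} [CommSemiring R]

lemma root_self (q : Fin r) : root q q = Pi.single q 1 := by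
  ext t
  rw [root_apply, Pi.single_apply]
  split_ifs <;> first | rfl | omega

lemma root_le_single {a b q : Fin r} {n : ℕ} (hab : a ≤ b) (h : root a b ≤ Pi.single q n) :
    a = q ∧ b = q := by
  have ha := h a
  have hb := h b
  simp only [root_apply, Pi.single_apply] at ha hb
  split_ifs at ha hb <;> omega

lemma decomps_single (q : Fin r) (n : ℕ) :
    decomps (Pi.single q n) = {Finsupp.single (root q q) n} := by
  ext m
  simp only [decomps, Set.mem_ofPred_eq, Set.mem_singleton_iff]
  constructor
  · rintro ⟨hroot, hw⟩
    have hsupp : m.support ⊆ {root q q} := fun v hv => by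
      obtain ⟨a, b, hab, rfl⟩ := isPosRootA_iff.1 (hroot v hv)
      obtain ⟨rfl, rfl⟩ := root_le_single hab (hw ▸ le_weight_of_mem_support hv)
      exact Finset.mem_singleton_self _
    rw [Finsupp.support_subset_singleton] at hsupp
    rw [hsupp, weight_single, root_self] at hw
    have := congrFun hw q
    simp only [Pi.smul_apply, Pi.single_eq_same, smul_eq_mul, mul_one] at this
    rw [hsupp, root_self, this]
  · rintro rfl
    refine ⟨fun v hv => isPosRootA_iff.2 ⟨q, q, le_rfl, ?_⟩, ?_⟩
    · exact (Finset.mem_singleton.1 (Finsupp.support_single_subset hv))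
    · rw [weight_single, root_self, ← Pi.single_smul, smul_eq_mul, mul_one]

lemma genPoly_single (q : Fin r) (n : ℕ) : genPoly R (Pi.single q n) = X ^ n := by
  have : (decomps_finite (Pi.single q n)).toFinset = {Finsupp.single (root q q) n} := by
    ext m
    simp [decomps_single]
  rw [genPoly, this, Finset.sum_singleton, Finsupp.degree_single]

lemma add_mem_decomps {α β : Fin r → ℕ} {m n : (Fin r → ℕ) →₀ ℕ} (hm : m ∈ decomps α)
    (hn : n ∈ decomps β) : m + n ∈ decomps (α + β) := by
  classical
  refine ⟨fun v hv => ?_, by rw [weight_add, hm.2, hn.2]⟩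
  rcases Finset.mem_union.1 (Finsupp.support_add hv) with h | h
  exacts [hm.1 v h, hn.1 v h]

lemma single_root_mem_decomps {a b : Fin r} (hab : a ≤ b) :
    Finsupp.single (root a b) 1 ∈ decomps (root a b) := by
  refine ⟨fun v hv => isPosRootA_iff.2 ⟨a, b, hab, ?_⟩, by rw [weight_single, one_smul]⟩
  exact Finset.mem_singleton.1 (Finsupp.support_single_subset hv)

lemma apply_eq_zero_of_apply_ne_zero {ξ : Fin r → ℕ} {m : (Fin r → ℕ) →₀ ℕ}
    (hm : m ∈ decomps ξ) {p : Fin r} (hp : ξ p = 0) {v : Fin r → ℕ} (hv : v p ≠ 0) : m v = 0 :=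
  Finsupp.notMem_support_iff.1 fun hmem =>
    hv (Nat.le_zero.1 (hp ▸ hm.2 ▸ le_weight_of_mem_support hmem p))

open scoped Classical in
noncomputable def coverers (ξ : Fin r → ℕ) (p : Fin r) : Finset (Fin r × Fin r) :=
  {ab | ab.1 ≤ p ∧ p ≤ ab.2 ∧ root ab.1 ab.2 ≤ ξ}

lemma mem_coverers {ξ : Fin r → ℕ} {p a b : Fin r} :
    (a, b) ∈ coverers ξ p ↔ a ≤ p ∧ p ≤ b ∧ root a b ≤ ξ := by
  simp [coverers]

section Coverers

variable {ξ : Fin r → ℕ} {p : Fin r}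

lemma add_single_root_mem_decomps {a b : Fin r} (hab : (a, b) ∈ coverers ξ p)
    {m : (Fin r → ℕ) →₀ ℕ} (hm : m ∈ decomps (ξ - root a b)) :
    m + Finsupp.single (root a b) 1 ∈ decomps ξ := by
  obtain ⟨hap, hpb, hle⟩ := mem_coverers.1 hab
  simpa [tsub_add_cancel_of_le hle] using
    add_mem_decomps hm (single_root_mem_decomps (hap.trans hpb))

/-- As `(ξ - root a b) p = 0`, `m` uses no root through `p`, so `root a b` is the only root through
`p` in `m + single (root a b) 1`. -/
lemma eq_of_add_single_root_eq (hp : ξ p = 1) {a b a' b' : Fin r}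
    (hab : (a, b) ∈ coverers ξ p) (hab' : (a', b') ∈ coverers ξ p)
    {m m' : (Fin r → ℕ) →₀ ℕ} (hm : m ∈ decomps (ξ - root a b))
    (hm' : m' ∈ decomps (ξ - root a' b'))
    (h : m + Finsupp.single (root a b) 1 = m' + Finsupp.single (root a' b') 1) :
    a = a' ∧ b = b' ∧ m = m' := by
  rw [mem_coverers] at hab hab'
  have hzero : ∀ {a b : Fin r}, a ≤ p → p ≤ b → (ξ - root a b) p = 0 := fun hap hpb => by
    simp [root_apply, hap, hpb, hp]
  have hcov : root a b p ≠ 0 := by simp [root_apply, hab.1, hab.2.1]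
  have hroot : root a' b' = root a b := by
    have := congrArg (· (root a b)) h
    simp only [Finsupp.add_apply, Finsupp.single_eq_same, Finsupp.single_apply,
      apply_eq_zero_of_apply_ne_zero hm (hzero hab.1 hab.2.1) hcov,
      apply_eq_zero_of_apply_ne_zero hm' (hzero hab'.1 hab'.2.1) hcov] at this
    by_contra hne
    simp [hne] at this
  obtain ⟨rfl, rfl⟩ := root_injective (hab'.1.trans hab'.2.1) hroot
  exact ⟨rfl, rfl, add_right_cancel h⟩

lemma exists_mem_coverers_of_mem_decomps (hp : ξ p = 1) {m : (Fin r → ℕ) →₀ ℕ}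
    (hm : m ∈ decomps ξ) :
    ∃ ab ∈ coverers ξ p, m - Finsupp.single (root ab.1 ab.2) 1 ∈ decomps (ξ - root ab.1 ab.2) ∧
      m - Finsupp.single (root ab.1 ab.2) 1 + Finsupp.single (root ab.1 ab.2) 1 = m := by
  have hmp : weight m p ≠ 0 := by simp [hm.2, hp]
  rw [weight_apply] at hmp
  obtain ⟨v, hv, hvp⟩ := Finset.exists_ne_zero_of_sum_ne_zero hmp
  obtain ⟨a, b, -, rfl⟩ := isPosRootA_iff.1 (hm.1 v hv)
  have hcov : a ≤ p ∧ p ≤ b := by simpa [root_apply] using right_ne_zero_of_mul hvp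
  have hsingle : Finsupp.single (root a b) 1 ≤ m :=
    Finsupp.single_le_iff.2 (Nat.one_le_iff_ne_zero.2 (Finsupp.mem_support_iff.1 hv))
  have hsplit := weight_add (m - Finsupp.single (root a b) 1) (Finsupp.single (root a b) 1)
  rw [tsub_add_cancel_of_le hsingle, hm.2, weight_single, one_smul] at hsplit
  refine ⟨(a, b), mem_coverers.2 ⟨hcov.1, hcov.2, hm.2 ▸ le_weight_of_mem_support hv⟩,
    ⟨fun w hw => hm.1 w (Finsupp.support_tsub hw), eq_tsub_of_add_eq hsplit.symm⟩,
    tsub_add_cancel_of_le hsingle⟩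

lemma genPoly_eq_X_mul_sum_coverers (hp : ξ p = 1) :
    genPoly R ξ = X * ∑ ab ∈ coverers ξ p, genPoly R (ξ - root ab.1 ab.2) := by
  simp only [genPoly, Finset.mul_sum, ← pow_succ']
  rw [Finset.sum_sigma']
  symm
  refine Finset.sum_bij (fun x _ => x.2 + Finsupp.single (root x.1.1 x.1.2) 1)
    (fun _ hx => ?_) (fun ⟨⟨_, _⟩, _⟩ hx ⟨⟨_, _⟩, _⟩ hx' h => ?_) (fun m hm => ?_)
    (fun _ _ => by simp [pow_succ])
  · rw [Finset.mem_sigma, Set.Finite.mem_toFinset] at hx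
    exact (Set.Finite.mem_toFinset _).2 (add_single_root_mem_decomps hx.1 hx.2)
  · simp only [Finset.mem_sigma, Set.Finite.mem_toFinset] at hx hx'
    obtain ⟨rfl, rfl, rfl⟩ := eq_of_add_single_root_eq hp hx.1 hx'.1 hx.2 hx'.2 h
    rfl
  · obtain ⟨ab, hab, hmem, heq⟩ := exists_mem_coverers_of_mem_decomps hp
      ((Set.Finite.mem_toFinset _).1 hm)
    exact ⟨⟨ab, _⟩, Finset.mem_sigma.2 ⟨hab, (Set.Finite.mem_toFinset _).2 hmem⟩, heq⟩

end Coverers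

lemma weight_apply_eq_zero {m : (Fin r → ℕ) →₀ ℕ} {t : Fin r}
    (h : ∀ v ∈ m.support, v t = 0) : weight m t = 0 := by
  rw [weight_apply]
  exact Finset.sum_eq_zero fun v hv => by rw [h v hv, mul_zero]

def IsLeftOf (p : Fin r) (v : Fin r → ℕ) : Prop := ∀ t, p ≤ t → v t = 0

def IsRightOf (p : Fin r) (v : Fin r → ℕ) : Prop := ∀ t, t ≤ p → v t = 0

instance (p : Fin r) : DecidablePred (IsLeftOf p) := fun v =>
  inferInstanceAs (Decidable (∀ t, p ≤ t → v t = 0))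

section Separated

variable {α β : Fin r → ℕ} {p : Fin r}

lemma IsLeftOf.of_mem_support (hα : IsLeftOf p α) {m : (Fin r → ℕ) →₀ ℕ} (hm : m ∈ decomps α)
    {v : Fin r → ℕ} (hv : v ∈ m.support) : IsLeftOf p v := fun t ht =>
  Nat.le_zero.1 (hα t ht ▸ hm.2 ▸ le_weight_of_mem_support hv t)

lemma IsRightOf.of_mem_support (hβ : IsRightOf p β) {m : (Fin r → ℕ) →₀ ℕ}
    (hm : m ∈ decomps β) {v : Fin r → ℕ} (hv : v ∈ m.support) : IsRightOf p v := fun t ht =>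
  Nat.le_zero.1 (hβ t ht ▸ hm.2 ▸ le_weight_of_mem_support hv t)

lemma not_isLeftOf_root {a b : Fin r} (hab : a ≤ b) (h : IsRightOf p (root a b)) :
    ¬ IsLeftOf p (root a b) := fun h' => by
  have ha : root a b a = 1 := by simp [root_apply, hab]
  rcases le_total a p with hap | hpa
  · rw [h a hap] at ha
    exact zero_ne_one ha
  · rw [h' a hpa] at ha
    exact zero_ne_one ha

/-- A root vanishing at `p` lies entirely on one side of `p`. -/
lemma isRightOf_of_not_isLeftOf (hα : IsLeftOf p α) (hβ : IsRightOf p β)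
    {m : (Fin r → ℕ) →₀ ℕ} (hm : m ∈ decomps (α + β)) {v : Fin r → ℕ} (hv : v ∈ m.support)
    (hleft : ¬ IsLeftOf p v) : IsRightOf p v := by
  obtain ⟨a, b, hab, rfl⟩ := isPosRootA_iff.1 (hm.1 v hv)
  have hp := hm.2 ▸ le_weight_of_mem_support hv p
  intro t ht
  simp only [Pi.add_apply, hα p le_rfl, hβ p le_rfl, IsLeftOf, root_apply, not_forall] at hp hleft ⊢
  obtain ⟨s, hs, hs'⟩ := hleft
  split_ifs at hp hs' ⊢ <;> omega

lemma filter_isLeftOf_eq_self (hα : IsLeftOf p α) {m : (Fin r → ℕ) →₀ ℕ}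
    (hm : m ∈ decomps α) : m.filter (IsLeftOf p) = m :=
  (Finsupp.filter_eq_self_iff _ m).2 fun _ hv =>
    hα.of_mem_support hm (Finsupp.mem_support_iff.2 hv)

lemma filter_isLeftOf_eq_zero (hβ : IsRightOf p β) {n : (Fin r → ℕ) →₀ ℕ}
    (hn : n ∈ decomps β) : n.filter (IsLeftOf p) = 0 := by
  refine (Finsupp.filter_eq_zero_iff _ n).2 fun v hleft =>
    Finsupp.notMem_support_iff.1 fun hv => ?_
  obtain ⟨a, b, hab, rfl⟩ := isPosRootA_iff.1 (hn.1 _ hv)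
  exact not_isLeftOf_root hab (hβ.of_mem_support hn hv) hleft

lemma filter_mem_decomps (hα : IsLeftOf p α) (hβ : IsRightOf p β) {m : (Fin r → ℕ) →₀ ℕ}
    (hm : m ∈ decomps (α + β)) :
    m.filter (IsLeftOf p) ∈ decomps α ∧ m.filter (¬ IsLeftOf p ·) ∈ decomps β := by
  set m₁ := m.filter (IsLeftOf p)
  set m₂ := m.filter (¬ IsLeftOf p ·)
  have hsum : weight m₁ + weight m₂ = α + β := by
    rw [← weight_add, Finsupp.filter_add_filter_not, hm.2]
  have h₁ : IsLeftOf p (weight m₁) := fun t ht => weight_apply_eq_zero fun v hv => by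
    rw [Finsupp.support_filter, Finset.mem_filter] at hv
    exact hv.2 t ht
  have h₂ : IsRightOf p (weight m₂) := fun t ht => weight_apply_eq_zero fun v hv => by
    rw [Finsupp.support_filter, Finset.mem_filter] at hv
    exact isRightOf_of_not_isLeftOf hα hβ hm hv.1 hv.2 t ht
  have hw₁ : weight m₁ = α := funext fun t => by
    have := congrFun hsum t
    rcases le_total p t with hpt | htp
    · rw [h₁ t hpt, hα t hpt]
    · simpa only [Pi.add_apply, h₂ t htp, hβ t htp, add_zero] using this
  rw [hw₁] at hsum
  exact ⟨⟨fun v hv => hm.1 v (Finset.filter_subset _ _ hv), hw₁⟩,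
    fun v hv => hm.1 v (Finset.filter_subset _ _ hv), add_left_cancel hsum⟩

lemma genPoly_add_of_separated (hα : IsLeftOf p α) (hβ : IsRightOf p β) :
    genPoly R (α + β) = genPoly R α * genPoly R β := by
  simp only [genPoly, Finset.sum_mul_sum, ← pow_add, ← map_add]
  rw [← Finset.sum_product']
  symm
  refine Finset.sum_bij (fun x _ => x.1 + x.2) (fun x hx => ?_)
    (fun ⟨m, n⟩ hx ⟨m', n'⟩ hx' h => ?_) (fun m hm => ?_) (fun _ _ => rfl)
  · simp only [Finset.mem_product, Set.Finite.mem_toFinset] at hx ⊢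
    exact add_mem_decomps hx.1 hx.2
  · simp only [Finset.mem_product, Set.Finite.mem_toFinset] at hx hx'
    dsimp only at h
    have hm : m = m' := by
      simpa [Finsupp.filter_add, filter_isLeftOf_eq_self hα hx.1, filter_isLeftOf_eq_self hα hx'.1,
        filter_isLeftOf_eq_zero hβ hx.2, filter_isLeftOf_eq_zero hβ hx'.2] using
        congrArg (Finsupp.filter (IsLeftOf p)) h
    subst hm
    rw [(add_right_inj m).1 h]
  · rw [Set.Finite.mem_toFinset] at hm
    obtain ⟨h₁, h₂⟩ := filter_mem_decomps hα hβ hm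
    exact ⟨(_, _), Finset.mem_product.2 ⟨(Set.Finite.mem_toFinset _).2 h₁,
      (Set.Finite.mem_toFinset _).2 h₂⟩, Finsupp.filter_add_filter_not m _⟩

end Separated

section Glue

variable {ξ : Fin r → ℕ} {p : Fin r}

lemma sub_root_eq_add (hp : ξ p = 1) {a b : Fin r} (hab : (a, b) ∈ coverers ξ p) :
    ξ - root a b = ((Set.Iic p).indicator ξ - root a p) + ((Set.Ici p).indicator ξ - root p b) :=
  funext fun t => by
    obtain ⟨hap, hpb, hle⟩ := mem_coverers.1 hab
    have hle := hle t
    have hpt : t = p → ξ t = 1 := by rintro rfl; exact hp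
    simp only [Pi.add_apply, Pi.sub_apply, Set.indicator_apply, Set.mem_Iic, Set.mem_Ici,
      root_apply] at hle ⊢
    split_ifs at hle ⊢ <;> omega

lemma genPoly_sub_root (hp : ξ p = 1) {a b : Fin r} (hab : (a, b) ∈ coverers ξ p) :
    genPoly R (ξ - root a b) = genPoly R ((Set.Iic p).indicator ξ - root a p) *
      genPoly R ((Set.Ici p).indicator ξ - root p b) := by
  have hpt : ∀ t, t = p → ξ t = 1 := by rintro t rfl; exact hp
  obtain ⟨hap, hpb, -⟩ := mem_coverers.1 hab
  rw [sub_root_eq_add hp hab]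
  refine genPoly_add_of_separated (p := p) (fun t ht => ?_) (fun t ht => ?_) <;>
  · have := hpt t
    simp only [Pi.sub_apply, Set.indicator_apply, Set.mem_Iic, Set.mem_Ici, root_apply]
    split_ifs <;> omega

/-- The roots through `p` under `ξ` are the roots `[a, b]` glued from a root `[a, p]` under the left
part of `ξ` and a root `[p, b]` under its right part. -/
lemma sum_coverers_mul {M : Type*} [CommSemiring M] (F G : Fin r → Fin r → M) :
    ∑ ab ∈ coverers ξ p, F ab.1 p * G p ab.2 =
      (∑ ab ∈ coverers ((Set.Iic p).indicator ξ) p, F ab.1 ab.2) *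
        ∑ ab ∈ coverers ((Set.Ici p).indicator ξ) p, G ab.1 ab.2 := by
  rw [Finset.sum_mul_sum, ← Finset.sum_product']
  refine Finset.sum_nbij' (fun ab => ((ab.1, p), (p, ab.2))) (fun x => (x.1.1, x.2.2))
    (fun ⟨a, b⟩ hab => ?_) (fun ⟨⟨a, b'⟩, ⟨a', b⟩⟩ hx => ?_) (fun _ _ => rfl)
    (fun ⟨⟨a, b'⟩, ⟨a', b⟩⟩ hx => ?_) (fun _ _ => rfl)
  · rw [mem_coverers] at hab
    simp only [Finset.mem_product, mem_coverers]
    refine ⟨⟨hab.1, le_rfl, fun t => ?_⟩, ⟨le_rfl, hab.2.1, fun t => ?_⟩⟩ <;>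
    · have := hab.2.2 t
      simp only [Set.indicator_apply, Set.mem_Iic, Set.mem_Ici, root_apply] at this ⊢
      split_ifs at this ⊢ <;> omega
  · simp only [Finset.mem_product, mem_coverers] at hx ⊢
    obtain ⟨⟨hap, hpb', hleL⟩, ⟨ha'p, hpb, hleR⟩⟩ := hx
    refine ⟨hap, hpb, fun t => ?_⟩
    have h₁ := hleL t
    have h₂ := hleR t
    simp only [Set.indicator_apply, Set.mem_Iic, Set.mem_Ici, root_apply] at h₁ h₂ ⊢
    split_ifs at h₁ h₂ ⊢ <;> omega
  · simp only [Finset.mem_product, mem_coverers] at hx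
    obtain ⟨⟨hap, hpb', hleL⟩, ⟨ha'p, hpb, hleR⟩⟩ := hx
    have h₁ := hleL b'
    have h₂ := hleR a'
    simp only [Set.indicator_apply, Set.mem_Iic, Set.mem_Ici, root_apply] at h₁ h₂
    simp only [Prod.mk.injEq, true_and, and_true]
    constructor <;> (split_ifs at h₁ h₂ <;> omega)

lemma X_mul_genPoly_eq_genPoly_Iic_mul_Ici (hp : ξ p = 1) :
    X * genPoly R ξ =
      genPoly R ((Set.Iic p).indicator ξ) * genPoly R ((Set.Ici p).indicator ξ) := by
  rw [genPoly_eq_X_mul_sum_coverers hp, Finset.sum_congr rfl fun ab hab => genPoly_sub_root hp hab,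
    sum_coverers_mul (fun a b => genPoly R ((Set.Iic p).indicator ξ - root a b))
      (fun a b => genPoly R ((Set.Ici p).indicator ξ - root a b)),
    genPoly_eq_X_mul_sum_coverers (ξ := (Set.Iic p).indicator ξ) (p := p) (by simp [hp]),
    genPoly_eq_X_mul_sum_coverers (ξ := (Set.Ici p).indicator ξ) (p := p) (by simp [hp])]
  ring

end Glue

lemma coverers_eq_of_ne_zero_iff {ξ : Fin r → ℕ} {s e p : Fin r}
    (hξ : ∀ t, ξ t ≠ 0 ↔ s ≤ t ∧ t ≤ e) :
    coverers ξ p = Finset.Icc s p ×ˢ Finset.Icc p e := by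
  ext ⟨a, b⟩
  simp only [mem_coverers, Finset.mem_product, Finset.mem_Icc]
  constructor
  · rintro ⟨hap, hpb, hle⟩
    have ha := hle a
    have hb := hle b
    simp only [root_apply] at ha hb
    exact ⟨⟨((hξ a).1 (by split_ifs at ha <;> omega)).1, hap⟩, hpb,
      ((hξ b).1 (by split_ifs at hb <;> omega)).2⟩
  · rintro ⟨⟨hsa, hap⟩, hpb, hbe⟩
    refine ⟨hap, hpb, fun t => ?_⟩
    have := hξ t
    simp only [root_apply]
    split_ifs <;> omega

lemma root_add_single_ne_zero_iff {a q b : Fin r} (haq : a ≤ q) (hqb : q ≤ b) (n : ℕ) (t : Fin r) :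
    (root a b + Pi.single q n : Fin r → ℕ) t ≠ 0 ↔ a ≤ t ∧ t ≤ b := by
  simp only [Pi.add_apply, root_apply, Pi.single_apply]
  split_ifs <;> omega

lemma genPoly_root_add_single {q b : Fin r} (hqb : q.val + 1 = b.val) (n : ℕ) :
    genPoly R (root q b + Pi.single q n) = X ^ (n + 1) * (1 + X) := by
  have hcov : coverers (root q b + Pi.single q n) b = {(q, b), (b, b)} := by
    rw [coverers_eq_of_ne_zero_iff (root_add_single_ne_zero_iff le_rfl (by omega) n)]
    ext ⟨x, y⟩
    simp only [Finset.mem_product, Finset.mem_Icc, Finset.mem_insert, Finset.mem_singleton,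
      Prod.mk.injEq]
    omega
  have h₁ : root q b + Pi.single q n - root q b = Pi.single q n := add_tsub_cancel_left _ _
  have h₂ : root q b + Pi.single q n - root b b = Pi.single q (n + 1) := funext fun t => by
    simp only [Pi.add_apply, Pi.sub_apply, root_apply, Pi.single_apply]
    split_ifs <;> omega
  rw [genPoly_eq_X_mul_sum_coverers (p := b) (by
    simp only [Pi.add_apply, root_apply, Pi.single_apply]; split_ifs <;> omega), hcov,
    Finset.sum_pair (by simp [Fin.ext_iff]; omega), h₁, h₂, genPoly_single, genPoly_single]
  ring

lemma genPoly_root_add_single_mid {a q b : Fin r} (haq : a.val + 1 = q.val)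
    (hqb : q.val + 1 = b.val) {n : ℕ} (hn : 1 ≤ n) :
    genPoly R (root a b + Pi.single q n) = X ^ (n + 1) * (X ^ 2 + 2 * X + 2) := by
  obtain ⟨n, rfl⟩ := Nat.exists_eq_add_of_le' hn
  have hcov : coverers (root a b + Pi.single q (n + 1)) a = {(a, a), (a, q), (a, b)} := by
    rw [coverers_eq_of_ne_zero_iff (root_add_single_ne_zero_iff (by omega) (by omega) _)]
    ext ⟨x, y⟩
    simp only [Finset.mem_product, Finset.mem_Icc, Finset.mem_insert, Finset.mem_singleton,
      Prod.mk.injEq]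
    omega
  have h₁ : root a b + Pi.single q (n + 1) - root a a = root q b + Pi.single q (n + 1) :=
    funext fun t => by
      simp only [Pi.add_apply, Pi.sub_apply, root_apply, Pi.single_apply]
      split_ifs <;> omega
  have h₂ : root a b + Pi.single q (n + 1) - root a q = root q b + Pi.single q n :=
    funext fun t => by
      simp only [Pi.add_apply, Pi.sub_apply, root_apply, Pi.single_apply]
      split_ifs <;> omega
  have h₃ : root a b + Pi.single q (n + 1) - root a b = Pi.single q (n + 1) :=
    add_tsub_cancel_left _ _
  rw [genPoly_eq_X_mul_sum_coverers (p := a) (by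
    simp only [Pi.add_apply, root_apply, Pi.single_apply]; split_ifs <;> omega), hcov,
    Finset.sum_insert (by simp [Fin.ext_iff]; omega),
    Finset.sum_pair (by simp [Fin.ext_iff]; omega),
    h₁, h₂, h₃, genPoly_root_add_single hqb, genPoly_root_add_single hqb, genPoly_single]
  ring

lemma NA_eq_card_filter (k : ℕ) (ξ : Fin r → ℕ) :
    NA r k ξ = ((decomps_finite ξ).toFinset.filter fun m => m.degree = k).card := by
  rw [NA, ← Set.ncard_coe_finset]
  congr 1
  ext m
  simp only [Finset.coe_filter, Set.Finite.mem_toFinset, decomps, weight,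
    Finsupp.linearCombination_apply, Set.mem_ofPred_eq]
  exact ⟨fun ⟨h₁, h₂, h₃⟩ => ⟨⟨h₁, h₃⟩, h₂⟩, fun ⟨⟨h₁, h₃⟩, h₂⟩ => ⟨h₁, h₂, h₃⟩⟩

lemma tsum_mul_NA (f : ℕ → ℚ) (ξ : Fin r → ℕ) :
    ∑' k, f k * (NA r k ξ : ℚ) = ∑ m ∈ (decomps_finite ξ).toFinset, f m.degree := by
  classical
  set D := (decomps_finite ξ).toFinset
  rw [tsum_eq_sum (s := D.image Finsupp.degree) fun k hk => by
    rw [NA_eq_card_filter, Finset.card_eq_zero.2, Nat.cast_zero, mul_zero]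
    exact Finset.filter_eq_empty_iff.2 fun m hm hmk => hk (Finset.mem_image.2 ⟨m, hm, hmk⟩)]
  rw [← Finset.sum_fiberwise_of_maps_to (g := Finsupp.degree) (t := D.image Finsupp.degree)
    (fun m hm => Finset.mem_image_of_mem _ hm)]
  refine Finset.sum_congr rfl fun k _ => ?_
  rw [NA_eq_card_filter, Finset.sum_congr rfl fun m hm => by rw [(Finset.mem_filter.1 hm).2],
    Finset.sum_const, nsmul_eq_mul, mul_comm]

lemma eval_one_derivative_X_pow (n : ℕ) : (derivative (X ^ n : ℚ[X])).eval 1 = n := by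
  simp [derivative_X_pow]

lemma eval_one_second_moment_X_pow (n : ℕ) :
    (derivative (derivative (X ^ n : ℚ[X]))).eval 1 + (derivative (X ^ n : ℚ[X])).eval 1 =
      (n : ℚ) ^ 2 := by
  rcases n with _ | n
  · simp
  · simp [derivative_X_pow, derivative_mul]
    ring

lemma eval_one_genPoly (ξ : Fin r → ℕ) : (genPoly ℚ ξ).eval 1 = ∑' k : ℕ, (NA r k ξ : ℚ) := by
  simpa [genPoly, eval_finsetSum] using (tsum_mul_NA (fun _ => 1) ξ).symm

lemma eval_one_derivative_genPoly (ξ : Fin r → ℕ) :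
    (derivative (genPoly ℚ ξ)).eval 1 = ∑' k : ℕ, (k : ℚ) * NA r k ξ := by
  simp_rw [tsum_mul_NA, genPoly, map_sum, eval_finsetSum, eval_one_derivative_X_pow]

lemma eval_one_second_moment_genPoly (ξ : Fin r → ℕ) :
    (derivative (derivative (genPoly ℚ ξ))).eval 1 + (derivative (genPoly ℚ ξ)).eval 1 =
      ∑' k : ℕ, (k : ℚ) ^ 2 * NA r k ξ := by
  simp_rw [tsum_mul_NA, genPoly, map_sum, eval_finsetSum, ← Finset.sum_add_distrib,
    eval_one_second_moment_X_pow]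

lemma pgfMean_genPoly (ξ : Fin r → ℕ) :
    pgfMean (genPoly ℚ ξ) = (∑' k : ℕ, (k : ℚ) * NA r k ξ) / ∑' k : ℕ, (NA r k ξ : ℚ) := by
  rw [pgfMean, eval_one_derivative_genPoly, eval_one_genPoly]

lemma pgfVariance_genPoly (ξ : Fin r → ℕ) :
    pgfVariance (genPoly ℚ ξ) = (∑' k : ℕ, (k : ℚ) ^ 2 * NA r k ξ) / (∑' k : ℕ, (NA r k ξ : ℚ)) -
      ((∑' k : ℕ, (k : ℚ) * NA r k ξ) / ∑' k : ℕ, (NA r k ξ : ℚ)) ^ 2 := by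
  rw [pgfVariance, eval_one_second_moment_genPoly, eval_one_genPoly, pgfMean_genPoly]

lemma indicator_Ici_indicator_Iic {ξ : Fin r → ℕ} {a q b : Fin r} (haq : a ≤ q) (hqb : q ≤ b)
    {n : ℕ} (h : ∀ t, a ≤ t → t ≤ b → ξ t = if t = q then 1 + n else 1) :
    (Set.Ici a).indicator ((Set.Iic b).indicator ξ) = root a b + Pi.single q n := funext fun t => by
  simp only [Set.indicator_apply, Set.mem_Ici, Set.mem_Iic, Pi.add_apply, root_apply,
    Pi.single_apply]
  by_cases hat : a ≤ t <;> by_cases htb : t ≤ b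
  · rw [h t hat htb]
    split_ifs <;> omega
  all_goals split_ifs <;> omega

lemma indicator_Iic_indicator_Iic {ξ : Fin r → ℕ} {a b : Fin r} (hab : a ≤ b) :
    (Set.Iic a).indicator ((Set.Iic b).indicator ξ) = (Set.Iic a).indicator ξ := by
  rw [Set.indicator_indicator, Set.inter_eq_left.2 (Set.Iic_subset_Iic.2 hab)]

lemma genPoly_indicator_Iic_of_succ {ξ : Fin r → ℕ} {a p : Fin r} (hap : a.val + 1 = p.val)
    (ha : ξ a = 1) (hp : ξ p = 1) :
    genPoly R ((Set.Iic p).indicator ξ) = genPoly R ((Set.Iic a).indicator ξ) * (1 + X) := by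
  have hglue := X_mul_genPoly_eq_genPoly_Iic_mul_Ici (R := R) (p := a)
    (ξ := (Set.Iic p).indicator ξ) (by rwa [Set.indicator_of_mem (Set.mem_Iic.2 (by omega))])
  rw [indicator_Iic_indicator_Iic (by omega),
    indicator_Ici_indicator_Iic (q := a) (n := 0) le_rfl (by omega) fun t hat htp => ?_,
    genPoly_root_add_single hap] at hglue
  · exact isRegular_X.left (hglue.trans (by ring))
  · rcases (show t = a ∨ t = p by omega) with rfl | rfl <;> simp [ha, hp]

lemma genPoly_indicator_Iic_of_add_two {ξ : Fin r → ℕ} {a q p : Fin r} (haq : a.val + 1 = q.val)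
    (hqp : q.val + 1 = p.val) {n : ℕ} (hn : 1 ≤ n) (ha : ξ a = 1) (hq : ξ q = 1 + n)
    (hp : ξ p = 1) :
    genPoly R ((Set.Iic p).indicator ξ) =
      genPoly R ((Set.Iic a).indicator ξ) * (X ^ n * (X ^ 2 + 2 * X + 2)) := by
  have hglue := X_mul_genPoly_eq_genPoly_Iic_mul_Ici (R := R) (p := a)
    (ξ := (Set.Iic p).indicator ξ) (by rwa [Set.indicator_of_mem (Set.mem_Iic.2 (by omega))])
  rw [indicator_Iic_indicator_Iic (by omega),
    indicator_Ici_indicator_Iic (q := q) (n := n) (by omega) (by omega) fun t hat htp => ?_,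
    genPoly_root_add_single_mid haq hqp hn] at hglue
  · exact isRegular_X.left (hglue.trans (by ring))
  · rcases (show t = a ∨ t = q ∨ t = p by omega) with rfl | rfl | rfl
    · simp [ha, show t ≠ q by omega]
    · simp [hq]
    · simp [hp, show t ≠ q by omega]

lemma genPoly_indicator_Iic_of_val_eq_zero {ξ : Fin r → ℕ} {p : Fin r} (hp0 : p.val = 0)
    (hp : ξ p = 1) : genPoly R ((Set.Iic p).indicator ξ) = X := by
  have hsingle : (Set.Iic p).indicator ξ = Pi.single p 1 := funext fun t => by
    rcases eq_or_ne t p with rfl | htp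
    · simp [hp]
    · simp [htp, show ¬ t ≤ p by omega]
  rw [hsingle, genPoly_single, pow_one]

noncomputable def lambdaI (I : Finset ℕ) (c : ℕ → ℕ) : Fin r → ℕ :=
  fun t => if t.val + 1 ∈ I then 1 + c (t.val + 1) else 1

section Nonconsecutive

variable {I : Finset ℕ} {c : ℕ → ℕ}

lemma lambdaI_of_notMem {t : Fin r} (ht : t.val + 1 ∉ I) : lambdaI I c t = 1 := by
  simp [lambdaI, ht]

/-- `p : Fin r` is the `1`-based position `p + 1`, so `I ∩ range (p + 2)` are the positions of `I`
up to `p`. -/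
theorem genPoly_indicator_Iic_lambdaI (hI : ∀ i ∈ I, 1 < i ∧ i < r)
    (hnc : ∀ i ∈ I, ∀ j ∈ I, i < j → i + 2 ≤ j) (hc : ∀ i ∈ I, 1 ≤ c i)
    (p : Fin r) (hp : p.val + 1 ∉ I) :
    2 * (I ∩ range (p.val + 2)).card ≤ p.val ∧
    genPoly R ((Set.Iic p).indicator (lambdaI I c)) =
      X ^ (1 + ∑ i ∈ I ∩ range (p.val + 2), c i) *
        (1 + X) ^ (p.val - 2 * (I ∩ range (p.val + 2)).card) *
        (X ^ 2 + 2 * X + 2) ^ (I ∩ range (p.val + 2)).card := by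
  induction hN : p.val using Nat.strong_induction_on generalizing p with
  | _ N ih =>
  rcases N with _ | N
  · have hI2 : I ∩ range 2 = ∅ := Finset.eq_empty_of_forall_notMem fun i hi => by
      rw [Finset.mem_inter, Finset.mem_range] at hi
      have := hI i hi.1
      omega
    simp [hI2, genPoly_indicator_Iic_of_val_eq_zero hN (lambdaI_of_notMem hp)]
  have hnext : N + 2 ∉ I := by rwa [hN] at hp
  by_cases hmid : N + 1 ∈ I
  · have hprev : N ∉ I := fun h => by have := hnc N h (N + 1) hmid (by omega); omega
    have hN1 : 1 ≤ N := by have := hI _ hmid; omega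
    obtain ⟨a, ha⟩ : ∃ a : Fin r, a.val = N - 1 := ⟨⟨N - 1, by omega⟩, rfl⟩
    obtain ⟨q, hq⟩ : ∃ q : Fin r, q.val = N := ⟨⟨N, by omega⟩, rfl⟩
    have ha' : a.val + 1 = N := by omega
    obtain ⟨hcard, hIH⟩ := ih (N - 1) (by omega) a (ha' ▸ hprev) ha
    have hrange : I ∩ range (N + 1 + 2) = insert (N + 1) (I ∩ range (N - 1 + 2)) := by
      rw [range_add_one, Finset.inter_insert_of_notMem hnext, range_add_one,
        Finset.inter_insert_of_mem hmid, show N + 1 = N - 1 + 2 by omega]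
    have hnotin : N + 1 ∉ I ∩ range (N - 1 + 2) := by simp; omega
    rw [genPoly_indicator_Iic_of_add_two (q := q) (by omega) (by omega) (hc _ hmid)
      (lambdaI_of_notMem (ha' ▸ hprev)) (by simp [lambdaI, hq, hmid])
      (lambdaI_of_notMem hp), hIH, hrange, Finset.card_insert_of_notMem hnotin,
      Finset.sum_insert hnotin, show N + 1 - 2 * ((I ∩ range (N - 1 + 2)).card + 1) =
        N - 1 - 2 * (I ∩ range (N - 1 + 2)).card by omega]
    exact ⟨by omega, by ring⟩
  · obtain ⟨a, ha⟩ : ∃ a : Fin r, a.val = N := ⟨⟨N, by omega⟩, rfl⟩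
    obtain ⟨hcard, hIH⟩ := ih N (by omega) a (ha ▸ hmid) ha
    have hrange : I ∩ range (N + 1 + 2) = I ∩ range (N + 2) := by
      rw [range_add_one (n := N + 2), Finset.inter_insert_of_notMem hnext]
    rw [genPoly_indicator_Iic_of_succ (by omega) (lambdaI_of_notMem (ha ▸ hmid))
      (lambdaI_of_notMem hp), hIH, hrange, show N + 1 - 2 * (I ∩ range (N + 2)).card =
        N - 2 * (I ∩ range (N + 2)).card + 1 by omega]
    exact ⟨by omega, by ring⟩

theorem genPoly_lambdaI (hr : 0 < r) (hI : ∀ i ∈ I, 1 < i ∧ i < r)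
    (hnc : ∀ i ∈ I, ∀ j ∈ I, i < j → i + 2 ≤ j) (hc : ∀ i ∈ I, 1 ≤ c i) :
    2 * I.card ≤ r - 1 ∧
    genPoly R (lambdaI (r := r) I c) =
      X ^ (1 + ∑ i ∈ I, c i) * (1 + X) ^ (r - 1 - 2 * I.card) * (X ^ 2 + 2 * X + 2) ^ I.card := by
  have hlast := genPoly_indicator_Iic_lambdaI (R := R) hI hnc hc ⟨r - 1, by omega⟩
    fun h => by have := hI _ h; simp at this; omega
  have hI' : I ∩ range (r - 1 + 2) = I :=
    Finset.inter_eq_left.2 fun i hi => Finset.mem_range.2 (by have := hI i hi; omega)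
  have huniv : Set.Iic (⟨r - 1, by omega⟩ : Fin r) = Set.univ :=
    Set.eq_univ_of_forall fun t => Set.mem_Iic.2 (Fin.le_def.2 (by simp; omega))
  simpa only [hI', huniv, Set.indicator_univ] using hlast

end Nonconsecutive

end TypeA

open TypeA in
/-- Proposition 3.6: for `λ = Σ α_i + Σ_j c_{i_j} α_{i_j}` with `I = {i_1 < ⋯ < i_ℓ}`
nonconsecutive, `1 < i_1`, `i_ℓ < r−2`, and positive coefficients `c` summing to `m`,
the mean of the number of positive roots used in the decompositions of `λ` is
`(r+1)/2 − ℓ/5 + m` and the variance is `(r−1)/4 + 3ℓ/50`. -/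
theorem mean_variance_nonconsecutive (r ℓ : ℕ) (hr : 5 ≤ r)
    (I : Finset ℕ) (hcard : I.card = ℓ)
    (hI : ∀ i ∈ I, 1 < i ∧ i < r - 2)
    (hnc : ∀ i ∈ I, ∀ j ∈ I, i < j → i + 2 ≤ j)
    (c : ℕ → ℕ) (hc : ∀ i ∈ I, 1 ≤ c i)
    (m : ℕ) (hm : m = ∑ i ∈ I, c i)
    (lam : Fin r → ℕ)
    (hlam : lam = fun t => if t.val + 1 ∈ I then 1 + c (t.val + 1) else 1) :
    (∑' k : ℕ, (k : ℚ) * (NA r k lam : ℚ)) / (∑' k : ℕ, (NA r k lam : ℚ)) =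
      ((r : ℚ) + 1) / 2 - (ℓ : ℚ) / 5 + (m : ℚ) ∧
    (∑' k : ℕ, (k : ℚ) ^ 2 * (NA r k lam : ℚ)) / (∑' k : ℕ, (NA r k lam : ℚ)) -
      ((∑' k : ℕ, (k : ℚ) * (NA r k lam : ℚ)) / (∑' k : ℕ, (NA r k lam : ℚ))) ^ 2 =
      ((r : ℚ) - 1) / 4 + 3 * (ℓ : ℚ) / 50 := by
  obtain rfl : lam = lambdaI I c := hlam
  subst hm hcard
  obtain ⟨hℓ, hP⟩ := genPoly_lambdaI (R := ℚ) (r := r) (by omega)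
    (fun i hi => ⟨(hI i hi).1, by have := hI i hi; omega⟩) hnc hc
  rw [← pgfVariance_genPoly, ← pgfMean_genPoly, hP, pgfMean_X_pow_mul_pow_mul_pow,
    pgfVariance_X_pow_mul_pow_mul_pow, Nat.cast_sub hℓ, Nat.cast_sub (by omega)]
  push_cast
  constructor <;> ring
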